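/- Let μ be an unconditional probability measure on ℝ^n, X distributed according to μ, and for ℓ ≤ n let M_ℓ be the essential supremum of (Σ_{i=1}^ℓ (x_i^2)^*)^{1/2}, the ℓ_2 norm of the ℓ largest coordinates of X in absolute value. Then for every subset I ⊂ {1,...,n} and every vector v supported on I, the ψ_2 norm of ⟨v, X⟩ satisfies ‖⟨v,·⟩‖_{ψ_2} ≤ C ‖v‖_{ℓ_∞} M_{|I|}, where C is an absolute constant. -/

import Mathlib

/-!
Fix a point `x` and write `aᵢ = vᵢ xᵢ`. Since `μ` is invariant under every sign flip `x ↦ ε * x`,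
`∫ exp(⟨v, x⟩² / c²) dμ` equals the integral of the average over `ε ∈ {±1}ⁿ` of
`exp((∑ εᵢ aᵢ)² / c²)`. Khintchine's subgaussian estimate bounds this average by `2` as soon as
`c² ≥ 4 ∑ aᵢ²`: linearize the square by the Gaussian identity
`√(2π) exp(s² / 2) = ∫ exp(s t - t² / 2) dt`, after which the average over signs factorizes into
`∏ cosh(aᵢ t') ≤ exp(t'² ∑ aᵢ² / 2)`. Finally `∑ aᵢ² ≤ ‖v‖²_∞ ∑_{i ∈ I} xᵢ² ≤ ‖v‖²_∞ M_{|I|}²`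
almost surely, so the statement holds with `C = 2`.
-/

open MeasureTheory

/-- The `ψ₂` (subgaussian) norm of a function `f` with respect to a measure `μ`. -/
noncomputable def psiTwoNorm {α : Type*} [MeasurableSpace α] (μ : Measure α)
    (f : α → ℝ) : ℝ :=
  sInf {c : ℝ | 0 < c ∧ ∫ x, Real.exp (f x ^ 2 / c ^ 2) ∂μ ≤ 2}

/-- The sum of the `ℓ` largest squared coordinates of `x`:
`Σ_{i=1}^ℓ (x_i^2)^* = sup_{|I| = ℓ} Σ_{i ∈ I} x_i^2`. -/
noncomputable def topSqSum {n : ℕ} (x : Fin n → ℝ) (ℓ : ℕ) : ℝ :=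
  ⨆ I : {I : Finset (Fin n) // I.card = ℓ}, ∑ i ∈ I.1, x i ^ 2

/-- A measure `μ` on `ℝ^n` is unconditional if it is invariant under sign flips of
the coordinates. -/
def IsUncondMeasure {n : ℕ} (μ : Measure (Fin n → ℝ)) : Prop :=
  ∀ s : Fin n → ℝ, (∀ i, s i = 1 ∨ s i = -1) →
    Measure.map (fun x i => s i * x i) μ = μ

open Real Finset

lemma exp_mul_sub_sq_div_two_eq (b x : ℝ) :
    exp (b * x - x ^ 2 / 2) = exp (b ^ 2 / 2) * exp (-(1 / 2) * (x - b) ^ 2) := by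
  rw [← exp_add]; ring_nf

lemma integrable_exp_mul_sub_sq_div_two (b : ℝ) :
    Integrable fun x : ℝ => exp (b * x - x ^ 2 / 2) := by
  simp_rw [exp_mul_sub_sq_div_two_eq b]
  exact ((integrable_exp_neg_mul_sq one_half_pos).comp_sub_right b).const_mul _

lemma integral_exp_mul_sub_sq_div_two (b : ℝ) :
    ∫ x : ℝ, exp (b * x - x ^ 2 / 2) = √(2 * π) * exp (b ^ 2 / 2) := by
  simp_rw [exp_mul_sub_sq_div_two_eq b]
  rw [integral_const_mul, integral_sub_right_eq_self (fun x => exp (-(1 / 2) * x ^ 2)) b,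
    integral_gaussian, show π / (1 / 2) = 2 * π by ring, mul_comm]

section Signs

variable {ι : Type*} [Fintype ι] [DecidableEq ι]

noncomputable def signVectors (ι : Type*) [Fintype ι] [DecidableEq ι] : Finset (ι → ℝ) :=
  Fintype.piFinset fun _ => {1, -1}

lemma mem_signVectors {ε : ι → ℝ} : ε ∈ signVectors ι ↔ ∀ i, ε i = 1 ∨ ε i = -1 := by
  simp [signVectors]

lemma card_signVectors : #(signVectors ι) = 2 ^ Fintype.card ι := by
  simp [signVectors, Fintype.card_piFinset, card_pair (by norm_num : (1 : ℝ) ≠ -1)]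

lemma sum_signVectors_exp_mul_le (a : ι → ℝ) (t : ℝ) :
    ∑ ε ∈ signVectors ι, exp (t * ∑ i, ε i * a i)
      ≤ 2 ^ Fintype.card ι * exp (t ^ 2 * (∑ i, a i ^ 2) / 2) := by
  have h_factor : ∑ ε ∈ signVectors ι, exp (t * ∑ i, ε i * a i)
      = ∏ i, 2 * cosh (t * a i) := by
    simp_rw [mul_sum, exp_sum]
    rw [signVectors, sum_prod_piFinset {1, -1} fun i e => exp (t * (e * a i))]
    refine prod_congr rfl fun i _ => ?_
    rw [sum_pair (by norm_num : (1 : ℝ) ≠ -1), cosh_eq]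
    ring_nf
  calc ∑ ε ∈ signVectors ι, exp (t * ∑ i, ε i * a i)
      = ∏ i, 2 * cosh (t * a i) := h_factor
    _ ≤ ∏ i, 2 * exp ((t * a i) ^ 2 / 2) :=
        prod_le_prod (fun i _ => by positivity)
          fun i _ => mul_le_mul_of_nonneg_left (cosh_le_exp_half_sq _) zero_le_two
    _ = 2 ^ Fintype.card ι * exp (t ^ 2 * (∑ i, a i ^ 2) / 2) := by
        rw [prod_mul_distrib, prod_const, ← exp_sum, card_univ, mul_sum, sum_div]
        simp_rw [mul_pow]

/-- Khintchine's inequality in subgaussian form (the average over signs is unnormalized). -/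
lemma sum_signVectors_exp_sq_div_le (a : ι → ℝ) {c : ℝ} (hc : 0 < c)
    (ha : 4 * ∑ i, a i ^ 2 ≤ c ^ 2) :
    ∑ ε ∈ signVectors ι, exp ((∑ i, ε i * a i) ^ 2 / c ^ 2) ≤ 2 ^ Fintype.card ι * 2 := by
  set N : ℝ := 2 ^ Fintype.card ι
  have hZ : 0 < √(2 * π) := by positivity
  have h_linearize (s : ℝ) :
      exp (s ^ 2 / c ^ 2) = (√(2 * π))⁻¹ * ∫ x : ℝ, exp (√2 * s / c * x - x ^ 2 / 2) := by
    have h_sq : (√2 * s / c) ^ 2 / 2 = s ^ 2 / c ^ 2 := by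
      rw [div_pow, mul_pow, sq_sqrt zero_le_two]; ring
    rw [integral_exp_mul_sub_sq_div_two, h_sq, inv_mul_cancel_left₀ hZ.ne']
  have h_pointwise (x : ℝ) :
      ∑ ε ∈ signVectors ι, exp (√2 * (∑ i, ε i * a i) / c * x - x ^ 2 / 2)
        ≤ N * exp (-(1 / 4) * x ^ 2) := by
    simp_rw [show ∀ s, √2 * s / c * x = √2 * x / c * s by intro s; ring, sub_eq_add_neg,
      exp_add, ← sum_mul]
    have h_exponent :
        (√2 * x / c) ^ 2 * (∑ i, a i ^ 2) / 2 + -(x ^ 2 / 2) ≤ -(1 / 4) * x ^ 2 := by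
      rw [div_pow, mul_pow, sq_sqrt zero_le_two]
      have : x ^ 2 * (4 * ∑ i, a i ^ 2) ≤ x ^ 2 * c ^ 2 := by gcongr
      field_simp
      nlinarith
    calc (∑ ε ∈ signVectors ι, exp (√2 * x / c * ∑ i, ε i * a i)) * exp (-(x ^ 2 / 2))
        ≤ N * exp ((√2 * x / c) ^ 2 * (∑ i, a i ^ 2) / 2) * exp (-(x ^ 2 / 2)) := by
          gcongr; exact sum_signVectors_exp_mul_le a _
      _ ≤ N * exp (-(1 / 4) * x ^ 2) := by
          rw [mul_assoc, ← exp_add]; gcongr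
  have h_integral : ∫ x : ℝ, N * exp (-(1 / 4) * x ^ 2) = N * (√2 * √(2 * π)) := by
    rw [integral_const_mul, integral_gaussian, ← sqrt_mul zero_le_two]
    ring_nf
  simp_rw [h_linearize, ← mul_sum]
  rw [← integral_finsetSum _ fun ε _ => integrable_exp_mul_sub_sq_div_two _]
  calc (√(2 * π))⁻¹ * ∫ x, ∑ ε ∈ signVectors ι, exp (√2 * (∑ i, ε i * a i) / c * x - x ^ 2 / 2)
      ≤ (√(2 * π))⁻¹ * ∫ x : ℝ, N * exp (-(1 / 4) * x ^ 2) := by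
        refine mul_le_mul_of_nonneg_left (integral_mono ?_ ?_ h_pointwise) (by positivity)
        · exact integrable_finsetSum _ fun ε _ => integrable_exp_mul_sub_sq_div_two _
        · exact (integrable_exp_neg_mul_sq (by norm_num)).const_mul _
    _ = N * √2 := by rw [h_integral]; field_simp
    _ ≤ N * 2 := by
        gcongr
        rw [sqrt_le_left zero_le_two]; norm_num

end Signs

section Unconditional

variable {n : ℕ} {μ : Measure (Fin n → ℝ)} {g : (Fin n → ℝ) → ℝ} {ε : Fin n → ℝ}

lemma IsUncondMeasure.map_mul (hμ : IsUncondMeasure μ) (hε : ε ∈ signVectors (Fin n)) :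
    μ.map (ε * ·) = μ :=
  hμ ε (mem_signVectors.1 hε)

lemma IsUncondMeasure.integral_comp_mul (hμ : IsUncondMeasure μ) (hε : ε ∈ signVectors (Fin n))
    (hg : AEStronglyMeasurable g μ) : ∫ x, g (ε * x) ∂μ = ∫ x, g x ∂μ := by
  have h_map := hμ.map_mul hε
  rw [← integral_map (by fun_prop) (by rwa [h_map]), h_map]

lemma IsUncondMeasure.integrable_comp_mul (hμ : IsUncondMeasure μ) (hε : ε ∈ signVectors (Fin n))
    (hg : Integrable g μ) : Integrable (fun x => g (ε * x)) μ := by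
  rw [← hμ.map_mul hε] at hg
  exact (integrable_map_measure hg.aestronglyMeasurable (by fun_prop)).1 hg

lemma IsUncondMeasure.integral_le_of_ae_sum_signVectors_le [IsProbabilityMeasure μ]
    (hμ : IsUncondMeasure μ) (hg : AEStronglyMeasurable g μ) {B : ℝ} (hB : 0 ≤ B)
    (h : ∀ᵐ x ∂μ, ∑ ε ∈ signVectors (Fin n), g (ε * x) ≤ 2 ^ n * B) :
    ∫ x, g x ∂μ ≤ B := by
  by_cases hint : Integrable g μ
  · have h_sum : ∫ x, ∑ ε ∈ signVectors (Fin n), g (ε * x) ∂μ = 2 ^ n * ∫ x, g x ∂μ := by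
      rw [integral_finsetSum _ fun ε hε => hμ.integrable_comp_mul hε hint,
        sum_congr rfl fun ε hε => hμ.integral_comp_mul hε hg, sum_const, card_signVectors,
        Fintype.card_fin, nsmul_eq_mul, Nat.cast_pow, Nat.cast_ofNat]
    have h_le : ∫ x, ∑ ε ∈ signVectors (Fin n), g (ε * x) ∂μ ≤ 2 ^ n * B := by
      simpa using integral_mono_ae
        (integrable_finsetSum _ fun ε hε => hμ.integrable_comp_mul hε hint)
        (integrable_const (2 ^ n * B)) h
    rw [h_sum] at h_le
    exact le_of_mul_le_mul_left h_le (by positivity)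
  · rwa [integral_undef hint]

end Unconditional

lemma psiTwoNorm_le_of_forall_lt {α : Type*} [MeasurableSpace α] {μ : Measure α} {f : α → ℝ}
    {a : ℝ} (ha : 0 ≤ a) (h : ∀ c, a < c → ∫ x, exp (f x ^ 2 / c ^ 2) ∂μ ≤ 2) :
    psiTwoNorm μ f ≤ a :=
  le_of_forall_gt_imp_ge_of_dense fun c hc =>
    csInf_le ⟨0, fun _ hc' => hc'.1.le⟩ ⟨ha.trans_lt hc, h c hc⟩

lemma sum_sq_le_topSqSum {n : ℕ} (x : Fin n → ℝ) (I : Finset (Fin n)) :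
    ∑ i ∈ I, x i ^ 2 ≤ topSqSum x #I :=
  le_ciSup (f := fun J : {J : Finset (Fin n) // #J = #I} => ∑ i ∈ J.1, x i ^ 2)
    (Finite.bddAbove_range _) ⟨I, rfl⟩

lemma sum_mul_sq_le_iSup_abs_sq_mul_topSqSum {n : ℕ} {v : Fin n → ℝ} {I : Finset (Fin n)}
    (hv : ∀ i ∉ I, v i = 0) (x : Fin n → ℝ) :
    ∑ i, (v i * x i) ^ 2 ≤ (⨆ i, |v i|) ^ 2 * topSqSum x #I := by
  have hv_le (i : Fin n) : v i ^ 2 ≤ (⨆ i, |v i|) ^ 2 := by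
    rw [← sq_abs]
    exact pow_le_pow_left₀ (abs_nonneg _)
      (le_ciSup (f := fun i => |v i|) (Finite.bddAbove_range _) i) 2
  calc ∑ i, (v i * x i) ^ 2 = ∑ i ∈ I, v i ^ 2 * x i ^ 2 := by
        rw [← sum_subset (subset_univ I) fun i _ hi => by simp [hv i hi]]
        simp_rw [mul_pow]
    _ ≤ ∑ i ∈ I, (⨆ i, |v i|) ^ 2 * x i ^ 2 :=
        sum_le_sum fun i _ => mul_le_mul_of_nonneg_right (hv_le i) (sq_nonneg _)
    _ ≤ (⨆ i, |v i|) ^ 2 * topSqSum x #I := by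
        rw [← mul_sum]
        exact mul_le_mul_of_nonneg_left (sum_sq_le_topSqSum x I) (sq_nonneg _)

/-- for an unconditional measure, `‖⟨v,·⟩‖_{ψ₂} ≤ C ‖v‖_∞ M_{|I|}` for any
`v` supported on `I`, where `M_ℓ` is an essential bound on the `ℓ₂` norm of the `ℓ`
largest coordinates. -/
theorem psi2_bound_unconditional :
    ∃ C : ℝ, 0 < C ∧
      ∀ (n : ℕ), 0 < n → ∀ (μ : Measure (Fin n → ℝ)), IsProbabilityMeasure μ →
        IsUncondMeasure μ →
        ∀ (M : ℕ → ℝ),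
          (∀ ℓ : ℕ, ℓ ≤ n → ∀ᵐ x ∂μ, Real.sqrt (topSqSum x ℓ) ≤ M ℓ) →
          ∀ (I : Finset (Fin n)) (v : Fin n → ℝ), (∀ i ∉ I, v i = 0) →
            psiTwoNorm μ (fun x => ∑ i, v i * x i)
              ≤ C * (⨆ i : Fin n, |v i|) * M I.card := by
  refine ⟨2, two_pos, fun n _ μ _ hμ M hM I v hv => ?_⟩
  set V := ⨆ i, |v i|
  have hM_I : ∀ᵐ x ∂μ, 0 ≤ M I.card ∧ topSqSum x I.card ≤ M I.card ^ 2 := by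
    filter_upwards [hM I.card (by simpa using card_le_univ I)] with x hx using sqrt_le_iff.1 hx
  have hV : 0 ≤ V := Real.iSup_nonneg fun i => abs_nonneg (v i)
  have hMI : 0 ≤ M I.card := hM_I.exists.choose_spec.1
  refine psiTwoNorm_le_of_forall_lt (by positivity) fun c hc => ?_
  refine hμ.integral_le_of_ae_sum_signVectors_le
    (Continuous.aestronglyMeasurable (by fun_prop)) zero_le_two ?_
  filter_upwards [hM_I] with x hx
  have h_var : 4 * ∑ i, (v i * x i) ^ 2 ≤ c ^ 2 :=
    calc 4 * ∑ i, (v i * x i) ^ 2 ≤ 4 * (V ^ 2 * M I.card ^ 2) := by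
          grw [sum_mul_sq_le_iSup_abs_sq_mul_topSqSum hv x, hx.2]
      _ = (2 * V * M I.card) ^ 2 := by ring
      _ ≤ c ^ 2 := by gcongr
  have hc_pos : 0 < c := (by positivity : 0 ≤ 2 * V * M I.card).trans_lt hc
  simpa [Pi.mul_apply, mul_left_comm] using
    sum_signVectors_exp_sq_div_le (fun i => v i * x i) hc_pos h_var
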